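/- Let 𝒴 be a measurable space, n ∈ ℕ, (Y₁, …, Y_{n+1}) an exchangeable random vector in 𝒴^{n+1}, Ψ a measurable non-conformity measure invariant under permutations of its first argument, and T_i = Ψ((Y_j)_{j≠i}, Y_i). Let W ~ Unif(0,1) be independent of (Y₁, …, Y_{n+1}), and define the smoothed (randomized) conformal p-value at the truth: π^W = (n+1)^{-1} [ #{ i : T_i > T_{n+1} } + W · #{ i : T_i = T_{n+1} } ]. Then π^W is exactly uniformly distributed on [0,1]: ℙ( π^W ≤ α ) = α for every α ∈ [0,1]. (Exact calibration of the smoothed/randomized conformal transducer, Equation (randval).) -/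

import Mathlib

/-!
Write `G k + W * E k` for the numerator of the p-value in which point `k` plays the test point
(`G` counts strictly larger scores, `E` ties). Exchangeability of the data and equivariance of the
leave-one-out scores make `P(G k + W * E k ≤ β)` the same for every `k`. For fixed data, the
points with a common score occupy the rank window `[G, G + E)`, these windows tile `[0, n + 1)`,
and `P_W(G + W * E ≤ β) = |[G, G + E) ∩ [0, β)| / E`; summed over all `k` these probabilities
give exactly `β`. With `β = α (n + 1)`, each of the `n + 1` equal terms is `α`.
-/

open MeasureTheory ProbabilityTheory Finset

theorem volume_restrict_Icc_setOf_add_mul_le {g e b : ℝ} (he : 0 < e) :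
    volume.restrict (Set.Icc (0 : ℝ) 1) {u | g + u * e ≤ b}
      = ENNReal.ofReal ((min b (g + e) - min b g) / e) := by
  have hset : {u | g + u * e ≤ b} ∩ Set.Icc 0 1 = Set.Icc 0 (min ((b - g) / e) 1) := by
    ext u
    simp only [Set.mem_inter_iff, Set.mem_ofPred_eq, Set.mem_Icc, le_min_iff, le_div_iff₀ he]
    constructor <;> rintro ⟨h1, h2, h3⟩ <;> refine ⟨?_, ?_, ?_⟩ <;> linarith
  rw [Measure.restrict_apply' measurableSet_Icc, hset, Real.volume_Icc, sub_zero]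
  rcases le_total b g with hbg | hgb
  · rw [min_eq_left hbg, min_eq_left (hbg.trans (le_add_of_nonneg_right he.le)), sub_self,
      zero_div, ENNReal.ofReal_zero, ENNReal.ofReal_eq_zero]
    exact (min_le_left _ _).trans (div_nonpos_of_nonpos_of_nonneg (by linarith) he.le)
  rcases le_total b (g + e) with hb | hb
  · rw [min_eq_left hb, min_eq_right hgb, min_eq_left ((div_le_one he).2 (by linarith))]
  · rw [min_eq_right hb, min_eq_right hgb, min_eq_right ((one_le_div he).2 (by linarith)),
      add_sub_cancel_left, div_self he.ne']

theorem Equiv.Perm.exists_comp_succAbove {n : ℕ} (σ : Equiv.Perm (Fin (n + 1)))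
    (i : Fin (n + 1)) : ∃ τ : Equiv.Perm (Fin n), σ ∘ i.succAbove = (σ i).succAbove ∘ τ := by
  let e : {x // x ≠ i} ≃ {x // x ≠ σ i} := σ.subtypeEquiv fun _ => σ.injective.ne_iff.symm
  exact ⟨(finSuccAboveEquiv i).trans (e.trans (finSuccAboveEquiv (σ i)).symm), funext fun j =>
    (congrArg Subtype.val
      ((finSuccAboveEquiv (σ i)).apply_symm_apply (e (finSuccAboveEquiv i j)))).symm⟩

namespace Conformal

variable {ι : Type*}

section Counting

variable {α : Type*} [LinearOrder α]

def numAbove (s : Finset ι) (t : ι → α) (k : ι) : ℕ := #{j ∈ s | t k < t j}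

def numTies (s : Finset ι) (t : ι → α) (k : ι) : ℕ := #{j ∈ s | t j = t k}

theorem numTies_pos {s : Finset ι} (t : ι → α) {k : ι} (hk : k ∈ s) : 0 < numTies s t k :=
  card_pos.2 ⟨k, mem_filter.2 ⟨hk, rfl⟩⟩

theorem numAbove_comp_perm [Fintype ι] (t : ι → α) (σ : Equiv.Perm ι) (k : ι) :
    numAbove univ (t ∘ σ) k = numAbove univ t (σ k) :=
  card_equiv σ fun _ => by simp

theorem numTies_comp_perm [Fintype ι] (t : ι → α) (σ : Equiv.Perm ι) (k : ι) :
    numTies univ (t ∘ σ) k = numTies univ t (σ k) :=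
  card_equiv σ fun _ => by simp

theorem sum_sub_div_numTies (s : Finset ι) (t : ι → α) (φ : ℕ → ℝ) :
    ∑ i ∈ s, (φ (numAbove s t i + numTies s t i) - φ (numAbove s t i)) / numTies s t i
      = φ #s - φ 0 := by
  induction s using Finset.strongInduction with
  | H s ih =>
  rcases s.eq_empty_or_nonempty with rfl | hs
  · simp
  obtain ⟨m, hm, hmin⟩ := s.exists_min_image t hs
  set upper := {i ∈ s | t m < t i}
  set bottom := {i ∈ s | ¬ t m < t i}
  have hbottom : ∀ i ∈ bottom, t i = t m := fun i hi =>
    (not_lt.1 (mem_filter.1 hi).2).antisymm (hmin i (mem_filter.1 hi).1)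
  have hupper_sum : ∑ i ∈ upper,
      (φ (numAbove s t i + numTies s t i) - φ (numAbove s t i)) / numTies s t i
        = φ #upper - φ 0 := by
    rw [← ih upper (filter_ssubset.2 ⟨m, hm, lt_irrefl _⟩)]
    refine sum_congr rfl fun i hi => ?_
    have hi := (mem_filter.1 hi).2
    have habove : numAbove s t i = numAbove upper t i := by
      simp only [numAbove, upper, filter_filter]
      exact congrArg card (filter_congr fun j _ => ⟨fun h => ⟨hi.trans h, h⟩, And.right⟩)
    have hties : numTies s t i = numTies upper t i := by
      simp only [numTies, upper, filter_filter]
      exact congrArg card (filter_congr fun j _ => ⟨fun h => ⟨h ▸ hi, h⟩, And.right⟩)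
    rw [habove, hties]
  have hbottom_sum : ∑ i ∈ bottom,
      (φ (numAbove s t i + numTies s t i) - φ (numAbove s t i)) / numTies s t i
        = φ #s - φ #upper := by
    have habove : ∀ i ∈ bottom, numAbove s t i = #upper := fun i hi => by
      simp only [numAbove, upper, hbottom i hi]
    have hties : ∀ i ∈ bottom, numTies s t i = #bottom := fun i hi => by
      simp only [numTies, bottom, hbottom i hi]
      exact congrArg card (filter_congr fun j hj =>
        ⟨fun h => h ▸ lt_irrefl _, fun h => hbottom j (mem_filter.2 ⟨hj, h⟩)⟩)
    have hpos : (#bottom : ℝ) ≠ 0 := by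
      exact_mod_cast (card_pos.2 ⟨m, mem_filter.2 ⟨hm, lt_irrefl _⟩⟩).ne'
    rw [sum_congr rfl fun i hi => by
        rw [habove i hi, hties i hi, card_filter_add_card_filter_not], sum_const, nsmul_eq_mul]
    field_simp
  rw [← sum_filter_add_sum_filter_not s (fun i => t m < t i), hupper_sum, hbottom_sum]
  ring

end Counting

section Measurability

variable {𝒴 : Type*} [MeasurableSpace 𝒴] {T : (ι → 𝒴) → ι → ℝ}

theorem measurable_numAbove (hT : ∀ i, Measurable fun y => T y i) (s : Finset ι) (k : ι) :
    Measurable fun y => numAbove s (T y) k := by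
  simp only [numAbove, card_filter]
  exact Finset.measurable_sum _ fun j _ =>
    Measurable.ite (measurableSet_lt (hT k) (hT j)) measurable_const measurable_const

theorem measurable_numTies (hT : ∀ i, Measurable fun y => T y i) (s : Finset ι) (k : ι) :
    Measurable fun y => numTies s (T y) k := by
  simp only [numTies, card_filter]
  exact Finset.measurable_sum _ fun j _ =>
    Measurable.ite (measurableSet_eq_fun (hT j) (hT k)) measurable_const measurable_const

end Measurability

section SmoothedPValue

variable [Fintype ι]

noncomputable def smoothedPValue (t : ι → ℝ) (k : ι) (w : ℝ) : ℝ :=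
  (numAbove univ t k + w * numTies univ t k) / Fintype.card ι

theorem smoothedPValue_comp_perm (t : ι → ℝ) (σ : Equiv.Perm ι) (k : ι) (w : ℝ) :
    smoothedPValue (t ∘ σ) k w = smoothedPValue t (σ k) w := by
  rw [smoothedPValue, smoothedPValue, numAbove_comp_perm, numTies_comp_perm]

theorem sum_volume_restrict_Icc_smoothedPValue_le [Nonempty ι] (t : ι → ℝ) {α : ℝ}
    (hα : α ∈ Set.Icc (0 : ℝ) 1) :
    ∑ k, volume.restrict (Set.Icc (0 : ℝ) 1) {w | smoothedPValue t k w ≤ α}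
      = ENNReal.ofReal (α * Fintype.card ι) := by
  have hcard : (0 : ℝ) < Fintype.card ι := by exact_mod_cast Fintype.card_pos
  have hties k : (0 : ℝ) < numTies univ t k := by exact_mod_cast numTies_pos t (mem_univ k)
  have hset k : {w | smoothedPValue t k w ≤ α}
      = {w | (numAbove univ t k : ℝ) + w * numTies univ t k ≤ α * Fintype.card ι} := by
    simp only [smoothedPValue, div_le_iff₀ hcard]
  simp only [hset, volume_restrict_Icc_setOf_add_mul_le (hties _)]
  rw [← ENNReal.ofReal_sum_of_nonneg fun k _ => div_nonneg
      (sub_nonneg.2 (min_le_min_left _ (le_add_of_nonneg_right (hties k).le))) (hties k).le]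
  have := sum_sub_div_numTies univ t fun m => min (α * Fintype.card ι) m
  push_cast at this
  rw [this, card_univ, min_eq_left (mul_le_of_le_one_left hcard.le hα.2),
    min_eq_right (mul_nonneg hα.1 hcard.le), sub_zero]

variable {𝒴 : Type*} [MeasurableSpace 𝒴]

theorem measurable_smoothedPValue {T : (ι → 𝒴) → ι → ℝ} (hT : ∀ i, Measurable fun y => T y i)
    (k : ι) : Measurable fun p : (ι → 𝒴) × ℝ => smoothedPValue (T p.1) k p.2 := by
  have hcast {f : (ι → 𝒴) → ℕ} (hf : Measurable f) :
      Measurable fun p : (ι → 𝒴) × ℝ => (f p.1 : ℝ) :=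
    measurable_from_nat.comp (hf.comp measurable_fst)
  exact ((hcast (measurable_numAbove hT univ k)).add
    (measurable_snd.mul (hcast (measurable_numTies hT univ k)))).div_const _

theorem prod_setOf_smoothedPValue_le (μ : Measure (ι → 𝒴)) [IsProbabilityMeasure μ]
    (hμ : ∀ σ : Equiv.Perm ι, μ.map (fun y => y ∘ σ) = μ)
    (T : (ι → 𝒴) → ι → ℝ) (hT : ∀ i, Measurable fun y => T y i)
    (hTσ : ∀ (σ : Equiv.Perm ι) y, T (y ∘ σ) = T y ∘ σ) (k : ι) {α : ℝ}
    (hα : α ∈ Set.Icc (0 : ℝ) 1) :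
    μ.prod (volume.restrict (Set.Icc (0 : ℝ) 1)) {p | smoothedPValue (T p.1) k p.2 ≤ α}
      = ENNReal.ofReal α := by
  classical
  have : Nonempty ι := ⟨k⟩
  set ν := volume.restrict (Set.Icc (0 : ℝ) 1)
  set A : ι → Set ((ι → 𝒴) × ℝ) := fun i => {p | smoothedPValue (T p.1) i p.2 ≤ α}
  have hA i : MeasurableSet (A i) :=
    measurableSet_le (measurable_smoothedPValue hT i) measurable_const
  have hperm i : μ.prod ν (A i) = μ.prod ν (A k) := by
    set σ := Equiv.swap k i
    have hσ : Measurable fun y : ι → 𝒴 => y ∘ σ := by fun_prop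
    have hinv : (μ.prod ν).map (Prod.map (fun y => y ∘ σ) id) = μ.prod ν := by
      rw [← Measure.map_prod_map μ ν hσ measurable_id, hμ, Measure.map_id]
    have hpre : Prod.map (fun y => y ∘ σ) id ⁻¹' A k = A i := by
      ext p
      simp only [A, Set.mem_preimage, Set.mem_ofPred_eq, Prod.map_fst, Prod.map_snd, id, hTσ,
        smoothedPValue_comp_perm, σ, Equiv.swap_apply_left]
    rw [← hpre, ← Measure.map_apply (hσ.prodMap measurable_id) (hA k), hinv]
  have hsum : ∑ i, μ.prod ν (A i) = ENNReal.ofReal (α * Fintype.card ι) := by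
    simp only [Measure.prod_apply (hA _)]
    rw [← lintegral_finsetSum _ fun i _ => measurable_measure_prodMk_left (hA i)]
    simp only [A, ν, Set.preimage_ofPred_eq, sum_volume_restrict_Icc_smoothedPValue_le _ hα,
      lintegral_const, measure_univ, mul_one]
  rw [sum_congr rfl fun i _ => hperm i, sum_const, card_univ, nsmul_eq_mul,
    ENNReal.ofReal_mul hα.1, ENNReal.ofReal_natCast, mul_comm] at hsum
  exact (ENNReal.mul_left_inj (by simp) (ENNReal.natCast_ne_top _)).1 hsum

theorem measure_setOf_smoothedPValue_le {Ω : Type*} [MeasurableSpace Ω] (Pr : Measure Ω)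
    [IsProbabilityMeasure Pr] (X : Ω → ι → 𝒴) (hX : Measurable X)
    (hexch : ∀ σ : Equiv.Perm ι, Pr.map (fun ω => X ω ∘ σ) = Pr.map X)
    (T : (ι → 𝒴) → ι → ℝ) (hT : ∀ i, Measurable fun y => T y i)
    (hTσ : ∀ (σ : Equiv.Perm ι) y, T (y ∘ σ) = T y ∘ σ)
    (W : Ω → ℝ) (hW : Measurable W) (hWunif : Pr.map W = volume.restrict (Set.Icc (0 : ℝ) 1))
    (hindep : IndepFun W X Pr) (k : ι) {α : ℝ} (hα : α ∈ Set.Icc (0 : ℝ) 1) :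
    Pr {ω | smoothedPValue (T (X ω)) k (W ω) ≤ α} = ENNReal.ofReal α := by
  have hlaw : Pr.map (fun ω => (X ω, W ω)) = (Pr.map X).prod (volume.restrict (Set.Icc 0 1)) := by
    rw [← hWunif]
    exact (indepFun_iff_map_prod_eq_prod_map_map hX.aemeasurable hW.aemeasurable).1 hindep.symm
  have hμ (σ : Equiv.Perm ι) : (Pr.map X).map (fun y => y ∘ σ) = Pr.map X := by
    have hσ : Measurable fun y : ι → 𝒴 => y ∘ σ := by fun_prop
    rw [Measure.map_map hσ hX]
    exact hexch σ
  have := Measure.isProbabilityMeasure_map (μ := Pr) hX.aemeasurable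
  rw [← prod_setOf_smoothedPValue_le (Pr.map X) hμ T hT hTσ k hα, ← hlaw,
    Measure.map_apply (hX.prodMk hW) (measurableSet_le (measurable_smoothedPValue hT k)
      measurable_const)]
  rfl

end SmoothedPValue

section LeaveOneOut

variable {𝒴 : Type*} {n : ℕ}

def looScore (Ψ : (Fin n → 𝒴) → 𝒴 → ℝ) (y : Fin (n + 1) → 𝒴) (i : Fin (n + 1)) : ℝ :=
  Ψ (y ∘ i.succAbove) (y i)

theorem looScore_comp_perm {Ψ : (Fin n → 𝒴) → 𝒴 → ℝ}
    (hsym : ∀ σ : Equiv.Perm (Fin n), ∀ v y, Ψ (v ∘ σ) y = Ψ v y)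
    (σ : Equiv.Perm (Fin (n + 1))) (y : Fin (n + 1) → 𝒴) :
    looScore Ψ (y ∘ σ) = looScore Ψ y ∘ σ := by
  funext i
  obtain ⟨τ, hτ⟩ := σ.exists_comp_succAbove i
  simp only [looScore, Function.comp_apply, Function.comp_assoc, hτ]
  rw [← Function.comp_assoc, hsym]

theorem measurable_looScore [MeasurableSpace 𝒴] {Ψ : (Fin n → 𝒴) → 𝒴 → ℝ}
    (hΨ : Measurable fun p : (Fin n → 𝒴) × 𝒴 => Ψ p.1 p.2) (i : Fin (n + 1)) :
    Measurable fun y => looScore Ψ y i := by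
  have h : Measurable fun y : Fin (n + 1) → 𝒴 => (y ∘ i.succAbove, y i) := by fun_prop
  exact hΨ.comp h

end LeaveOneOut

end Conformal

open Conformal

/-- **Exact calibration of the smoothed/randomized conformal transducer (Equation
(randval)).** For an exchangeable vector `(Y₁,…,Y_{n+1})`, a symmetric non-conformity
measure `Ψ` with `T_i = Ψ((Y_j)_{j≠i}, Y_i)`, and `W ~ Unif(0,1)` independent of the data,
the smoothed conformal p-value at the truth,
`π^W = (n+1)⁻¹ ( #{i : T_i > T_{n+1}} + W ⋅ #{i : T_i = T_{n+1}} )`,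
is exactly `Unif(0,1)`: `P(π^W ≤ α) = α` for every `α ∈ [0,1]`. -/
theorem stmt13
    {Ω 𝒴 : Type*} [MeasurableSpace Ω] [MeasurableSpace 𝒴]
    (Pr : Measure Ω) [IsProbabilityMeasure Pr] (n : ℕ)
    (Y : Fin (n+1) → Ω → 𝒴) (hY : ∀ i, Measurable (Y i))
    (hexch : ∀ σ : Equiv.Perm (Fin (n+1)),
      Measure.map (fun ω => fun i => Y (σ i) ω) Pr
        = Measure.map (fun ω => fun i => Y i ω) Pr)
    (Ψ : (Fin n → 𝒴) → 𝒴 → ℝ)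
    (hΨ : Measurable fun p : (Fin n → 𝒴) × 𝒴 => Ψ p.1 p.2)
    (hsym : ∀ σ : Equiv.Perm (Fin n), ∀ v y, Ψ (v ∘ σ) y = Ψ v y)
    (W : Ω → ℝ) (hW : Measurable W)
    (hWunif : Pr.map W = volume.restrict (Set.Icc (0:ℝ) 1))
    (hindep : IndepFun W (fun ω => fun i => Y i ω) Pr) :
    ∀ α ∈ Set.Icc (0:ℝ) 1,
      Pr {ω |
        (((Finset.univ.filter fun i : Fin (n+1) =>
              Ψ (fun j => Y ((Fin.last n).succAbove j) ω) (Y (Fin.last n) ω)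
                < Ψ (fun j => Y (i.succAbove j) ω) (Y i ω)).card : ℝ)
          + W ω * ((Finset.univ.filter fun i : Fin (n+1) =>
              Ψ (fun j => Y (i.succAbove j) ω) (Y i ω)
                = Ψ (fun j => Y ((Fin.last n).succAbove j) ω) (Y (Fin.last n) ω)).card : ℝ))
          / ((n:ℝ)+1) ≤ α}
        = ENNReal.ofReal α := by
  intro α hα
  have := measure_setOf_smoothedPValue_le Pr (fun ω i => Y i ω) (measurable_pi_lambda _ hY) hexch
    (looScore Ψ) (measurable_looScore hΨ) (looScore_comp_perm hsym) W hW hWunif hindep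
    (Fin.last n) hα
  simp only [smoothedPValue, Fintype.card_fin, Nat.cast_add, Nat.cast_one] at this
  -- the two events differ only in the `Decidable` instances of their filters
  exact this
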